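/- Let A be a Dedekind domain with fraction field K, let L be a field extension of K, and let V be an L-vector space of finite dimension n ≥ 1. Call an A-submodule M ⊆ V an A-lattice if M is finitely generated, M spans V as an L-vector space, and the K-subspace of V spanned by M has dimension n over K. Then for any two A-lattices M and N in V there exists an L-linear automorphism σ of V with σ(M) ⊆ N. If moreover M and N are isomorphic as A-modules, then σ can be chosen so that σ(M) = N. -/

import Mathlib

/-!
A `K`-basis of the `K`-span of a lattice, chosen inside the lattice, is also an `L`-basis of `V`,
since it spans `V` over `L` and has `dim_L V` elements. Sending such a basis of `M` to one of
`N` maps `M` into the `K`-span of `N`; as `M` is finitely generated, a common denominator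
`a ∈ A` pushes it into `N`, and `σ` is this map followed by multiplication by `a`.
An `A`-isomorphism `φ : M ≃ N` instead prescribes the images `φ(eᵢ)` of the basis. The
`L`-linear extension agrees with `φ` on the `A`-span of the basis, hence on all of `M` because
`V` has no `A`-torsion, and its image contains `N`, which spans `V`.
-/

open Submodule Module

namespace IsLocalization

variable {A K V : Type*} [CommRing A] [CommRing K] [Algebra A K] [AddCommGroup V] [Module K V]
  [Module A V] [IsScalarTower A K V]

theorem exists_smul_mem_span_of_mem_span (S : Submonoid A) [IsLocalization S K] {s : Set V}
    {x : V} (hx : x ∈ span K s) :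
    ∃ a ∈ S, a • x ∈ span A s := by
  induction hx using span_induction with
  | mem y hy => exact ⟨1, S.one_mem, by simpa using subset_span hy⟩
  | zero => exact ⟨1, S.one_mem, by simp⟩
  | add y z _ _ ihy ihz =>
    obtain ⟨a, ha, hay⟩ := ihy
    obtain ⟨b, hb, hbz⟩ := ihz
    refine ⟨b * a, S.mul_mem hb ha, ?_⟩
    rw [smul_add, mul_smul, mul_comm, mul_smul]
    exact add_mem (smul_mem _ b hay) (smul_mem _ a hbz)
  | smul k y _ ihy =>
    obtain ⟨a, ha, hay⟩ := ihy
    obtain ⟨⟨c, b⟩, hk⟩ := surj S k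
    refine ⟨b * a, S.mul_mem b.2 ha, ?_⟩
    have hcancel : ((b : A) * a) • k • y = c • a • y := by
      rw [← algebraMap_smul K, smul_smul, ← algebraMap_smul K c, ← algebraMap_smul K a,
        smul_smul, map_mul, mul_right_comm, mul_comm _ k, hk]
    rw [hcancel]
    exact smul_mem _ c hay

theorem exists_smul_mem_span_of_fg (S : Submonoid A) [IsLocalization S K] {s : Set V}
    {P : Submodule A V} (hP : P.FG) (hPs : (P : Set V) ⊆ span K s) :
    ∃ a ∈ S, ∀ x ∈ P, a • x ∈ span A s := by
  induction P, hP using fg_induction with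
  | singleton x =>
    obtain ⟨a, ha, hax⟩ := exists_smul_mem_span_of_mem_span S (hPs (mem_span_singleton_self x))
    refine ⟨a, ha, fun y hy => ?_⟩
    obtain ⟨r, rfl⟩ := mem_span_singleton.mp hy
    rw [smul_comm]
    exact smul_mem _ r hax
  | sup P₁ P₂ _ _ ih₁ ih₂ =>
    obtain ⟨a, ha, h₁⟩ := ih₁ fun x hx => hPs (mem_sup_left hx)
    obtain ⟨b, hb, h₂⟩ := ih₂ fun x hx => hPs (mem_sup_right hx)
    refine ⟨a * b, S.mul_mem ha hb, fun x hx => ?_⟩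
    obtain ⟨y, hy, z, hz, rfl⟩ := mem_sup.mp hx
    rw [smul_add, mul_comm, mul_smul, mul_comm, mul_smul]
    exact add_mem (smul_mem _ b (h₁ y hy)) (smul_mem _ a (h₂ z hz))

theorem linearMap_ext_of_eqOn_of_le_span (S : Submonoid A) [IsLocalization S K] {W : Type*}
    [AddCommGroup W] [Module K W] [Module A W] [IsScalarTower A K W] {P : Submodule A V}
    {f g : P →ₗ[A] W} {s : Set P}
    (hP : (P : Set V) ⊆ span K (P.subtype '' s)) (h : Set.EqOn f g s) : f = g := by
  ext ⟨x, hx⟩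
  obtain ⟨a, ha, hax⟩ := exists_smul_mem_span_of_mem_span S (hP hx)
  rw [span_image] at hax
  obtain ⟨y, hy, hyx⟩ := hax
  have hy' : y = a • ⟨x, hx⟩ := Subtype.ext hyx
  apply (isSMulRegular_algebraMap_iff K).mp ((map_units K ⟨a, ha⟩).isSMulRegular W)
  simpa only [hy', map_smul] using LinearMap.eqOn_span h hy

end IsLocalization

section Basis

variable {K L V : Type*} [Field K] [Field L] [Algebra K L] [AddCommGroup V] [Module L V]
  [Module K V] [IsScalarTower K L V]

theorem exists_basis_subset_of_span_eq_top_of_finrank_span_eq {s : Set V}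
    (hL : span L s = ⊤) (hK : finrank K (span K s) = finrank L V) (hpos : 0 < finrank L V) :
    ∃ b : Basis (Fin (finrank L V)) L V,
      Set.range b ⊆ s ∧ span K (Set.range b) = span K s := by
  obtain ⟨t, hts, hspan, hli⟩ := exists_linearIndependent K s
  have : FiniteDimensional K (span K s) := Module.finite_of_finrank_pos (hK ▸ hpos)
  let bK : Basis t K (span K s) := (Basis.span hli).map (LinearEquiv.ofEq _ _ (by simp [hspan]))
  have := Module.Finite.finite_basis bK
  have := Fintype.ofFinite t
  have hcard : Fintype.card t = finrank L V := by rw [← hK, finrank_eq_card_basis bK]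
  have htop : ⊤ ≤ span L (Set.range ((↑) : t → V)) := by
    rw [← hL, span_le, Subtype.range_coe]
    exact fun x hx => span_subset_span K L t (hspan ▸ subset_span hx)
  refine ⟨(basisOfTopLeSpanOfCardEqFinrank _ htop hcard).reindex (Fintype.equivFinOfCardEq hcard),
    ?_, ?_⟩ <;>
    rw [Basis.range_reindex, coe_basisOfTopLeSpanOfCardEqFinrank, Subtype.range_coe]
  exacts [hts, hspan]

end Basis

section Lattice

variable {A K L V : Type*} [CommRing A] [Field K] [Algebra A K] [IsFractionRing A K] [Field L]
  [Algebra K L] [Algebra A L] [AddCommGroup V] [Module L V] [Module K V] [Module A V]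
  [IsScalarTower K L V] [IsScalarTower A K V] [IsScalarTower A L V]

theorem exists_linearEquiv_map_le [IsScalarTower A K L] {M N : Submodule A V} (hM : M.FG)
    (hML : span L (M : Set V) = ⊤) (hNL : span L (N : Set V) = ⊤)
    (hMK : finrank K (span K (M : Set V)) = finrank L V)
    (hNK : finrank K (span K (N : Set V)) = finrank L V) (hpos : 0 < finrank L V) :
    ∃ σ : V ≃ₗ[L] V, M.map ((σ : V →ₗ[L] V).restrictScalars A) ≤ N := by
  obtain ⟨e, -, heK⟩ := exists_basis_subset_of_span_eq_top_of_finrank_span_eq hML hMK hpos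
  obtain ⟨f, -, hfK⟩ := exists_basis_subset_of_span_eq_top_of_finrank_span_eq hNL hNK hpos
  let σ₀ := e.equiv f (Equiv.refl _)
  have hσ₀ : ∀ x ∈ M, σ₀ x ∈ span K (N : Set V) := fun x hx => by
    have hx : x ∈ span K (Set.range e) := heK ▸ subset_span hx
    have himage : σ₀ '' Set.range e = Set.range f := by
      rw [← Set.range_comp]
      exact congrArg Set.range (funext fun i => e.equiv_apply i f _)
    simpa [himage, hfK] using
      apply_mem_span_image_of_mem_span ((σ₀ : V →ₗ[L] V).restrictScalars K) hx
  obtain ⟨a, ha, hNa⟩ := IsLocalization.exists_smul_mem_span_of_fg (nonZeroDivisors A)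
    (hM.map ((σ₀ : V →ₗ[L] V).restrictScalars A))
    fun _ ⟨x, hx, hσx⟩ => hσx ▸ hσ₀ x hx
  have hunit : IsUnit (algebraMap A L a) := by
    rw [IsScalarTower.algebraMap_apply A K L]
    exact (IsLocalization.map_units K ⟨a, ha⟩).map _
  refine ⟨σ₀.trans (LinearEquiv.smulOfUnit hunit.unit), ?_⟩
  rintro _ ⟨x, hx, rfl⟩
  show algebraMap A L a • σ₀ x ∈ N
  rw [algebraMap_smul]
  simpa using hNa _ ⟨x, hx, rfl⟩

theorem exists_linearEquiv_map_eq_of_linearEquiv {M N : Submodule A V} (φ : M ≃ₗ[A] N)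
    (hML : span L (M : Set V) = ⊤) (hNL : span L (N : Set V) = ⊤)
    (hMK : finrank K (span K (M : Set V)) = finrank L V) (hpos : 0 < finrank L V) :
    ∃ σ : V ≃ₗ[L] V, M.map ((σ : V →ₗ[L] V).restrictScalars A) = N := by
  obtain ⟨e, heM, heK⟩ := exists_basis_subset_of_span_eq_top_of_finrank_span_eq hML hMK hpos
  have heM' : ∀ i, e i ∈ M := fun i => heM ⟨i, rfl⟩
  let σ₀ : V →ₗ[L] V := e.constr L fun i => φ ⟨e i, heM' i⟩
  have hext : (σ₀.restrictScalars A).comp M.subtype = N.subtype.comp (φ : M →ₗ[A] N) := by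
    refine IsLocalization.linearMap_ext_of_eqOn_of_le_span (K := K) (nonZeroDivisors A)
      (s := Set.range fun i => ⟨e i, heM' i⟩) ?_ ?_
    · rw [← Set.range_comp]
      exact heK ▸ subset_span
    · rintro _ ⟨i, rfl⟩
      simp [σ₀, e.constr_basis]
  have hrange : LinearMap.range ((σ₀.restrictScalars A).comp M.subtype) = N := by
    rw [hext, LinearMap.range_comp_of_range_eq_top _ φ.range, N.range_subtype]
  have hsurj : Function.Surjective σ₀ := by
    rw [← LinearMap.range_eq_top, eq_top_iff, ← hNL, span_le, ← hrange]
    rintro _ ⟨x, rfl⟩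
    exact ⟨x, rfl⟩
  have := Module.finite_of_finrank_pos hpos
  refine ⟨.ofBijective σ₀ ⟨LinearMap.injective_iff_surjective.2 hsurj, hsurj⟩, ?_⟩
  rw [← hrange, LinearMap.range_comp, M.range_subtype]
  rfl

end Lattice

theorem exists_linear_auto_maps_lattice_into_lattice
    (A : Type) [CommRing A]
    (K : Type) [Field K] [Algebra A K] [IsFractionRing A K]
    (L : Type) [Field L] [Algebra K L] [Algebra A L] [IsScalarTower A K L]
    (V : Type) [AddCommGroup V]
    [Module L V] [Module K V] [Module A V]
    [IsScalarTower K L V] [IsScalarTower A K V] [IsScalarTower A L V]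
    (n : ℕ) (hn : Module.finrank L V = n) (hn1 : 1 ≤ n)
    (M N : Submodule A V)
    (hMfg : M.FG)
    (hMspanL : Submodule.span L (M : Set V) = ⊤)
    (hNspanL : Submodule.span L (N : Set V) = ⊤)
    (hMrankK : Module.finrank K (Submodule.span K (M : Set V)) = n)
    (hNrankK : Module.finrank K (Submodule.span K (N : Set V)) = n) :
    (∃ σ : V ≃ₗ[L] V,
        Submodule.map (((σ : V →ₗ[L] V)).restrictScalars A) M ≤ N) ∧
    (Nonempty (M ≃ₗ[A] N) →
      ∃ σ : V ≃ₗ[L] V,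
        Submodule.map (((σ : V →ₗ[L] V)).restrictScalars A) M = N) := by
  subst hn
  exact ⟨exists_linearEquiv_map_le hMfg hMspanL hNspanL hMrankK hNrankK hn1,
    fun ⟨φ⟩ => exists_linearEquiv_map_eq_of_linearEquiv φ hMspanL hNspanL hMrankK hn1⟩
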